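/- Let g be an upper unitriangular n×n matrix over a field K and X an invertible n×n matrix. If I = {k,…,n} is an integer interval ending at n and J any subset with |I|=|J|, then the minor of adjugate(X·g) with rows I and columns J equals the minor of adjugate(X) with rows I and columns J. -/
import Mathlib

open Matrix

lemma aux_mul_submatrix {K : Type*} [CommRing K] {n m p : ℕ}
    (A B : Matrix (Fin n) (Fin n) K) (hA : ∀ i j : Fin n, j < i → A i j = 0)
    (r : Fin m → Fin n) (hrinj : Function.Injective r)
    (hr : ∀ t, n - m ≤ (r t).val)
    (hrange : ∀ k : Fin n, n - m ≤ k.val → ∃ t, r t = k)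
    (c : Fin p → Fin n) :
    (A * B).submatrix r c = A.submatrix r r * B.submatrix r c := by
  ext i j
  simp only [Matrix.mul_apply, Matrix.submatrix_apply]
  have h1 : ∑ k ∈ Finset.univ.map ⟨r, hrinj⟩, A (r i) k * B k (c j)
      = ∑ t : Fin m, A (r i) (r t) * B (r t) (c j) := Finset.sum_map _ _ _
  rw [← h1]
  symm
  apply Finset.sum_subset (Finset.subset_univ _)
  intro k _ hk
  have hk' : k.val < n - m := by
    by_contra h
    push_neg at h
    obtain ⟨t, ht⟩ := hrange k h
    exact hk (Finset.mem_map.mpr ⟨t, Finset.mem_univ _, ht⟩)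
  have : k < r i := by
    have := hr i
    exact Fin.lt_def.mpr (by omega)
  rw [hA _ _ this, zero_mul]

/-- minors of adjugate(X·g) with row set a terminal interval ending at n
coincide with the corresponding minors of adjugate(X), for g upper unitriangular and X invertible. -/
theorem stmt2 {K : Type*} [Field K] {n : ℕ} (m : ℕ) (hm : m ≤ n)
    (g X : Matrix (Fin n) (Fin n) K) (hX : IsUnit X.det)
    (hdiag : ∀ i, g i i = 1)
    (hlow : ∀ i j : Fin n, j < i → g i j = 0)
    (c : Fin m → Fin n) (hc : Function.Injective c) :
    ((X * g).adjugate.submatrix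
        (fun t : Fin m => (⟨n - m + t.val, by have := t.isLt; omega⟩ : Fin n)) c).det
      = (X.adjugate.submatrix
        (fun t : Fin m => (⟨n - m + t.val, by have := t.isLt; omega⟩ : Fin n)) c).det := by
  set r : Fin m → Fin n := fun t : Fin m => (⟨n - m + t.val, by have := t.isLt; omega⟩ : Fin n)
    with hr_def
  have hrinj : Function.Injective r := by
    intro a b hab
    have : n - m + a.val = n - m + b.val := congrArg Fin.val hab
    exact Fin.ext (by omega)
  have hrlo : ∀ t, n - m ≤ (r t).val := fun t => by simp [hr_def]
  have hrange : ∀ k : Fin n, n - m ≤ k.val → ∃ t, r t = k := by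
    intro k hk
    refine ⟨⟨k.val - (n - m), by have := k.isLt; omega⟩, ?_⟩
    apply Fin.ext
    simp [hr_def]
    omega
  -- g is upper triangular with det 1
  have hgbt : g.BlockTriangular id := fun i j h => hlow i j h
  have hdetg : g.det = 1 := by
    rw [Matrix.det_of_upperTriangular hgbt]
    simp [hdiag]
  -- adjugate g is upper triangular
  have hadjg_eq : g.adjugate = g⁻¹ := by
    rw [Matrix.inv_def, hdetg]
    simp
  have hadjbt : ∀ i j : Fin n, j < i → g.adjugate i j = 0 := by
    rw [hadjg_eq]
    have : Invertible g := g.invertibleOfIsUnitDet (by rw [hdetg]; exact isUnit_one)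
    have h2 : (g⁻¹).BlockTriangular id := Matrix.blockTriangular_inv_of_blockTriangular hgbt
    exact fun i j h => h2 h
  -- key product decomposition
  have key : ((X * g).adjugate.submatrix r c)
      = (g.adjugate.submatrix r r) * (X.adjugate.submatrix r c) := by
    rw [Matrix.adjugate_mul_distrib]
    exact aux_mul_submatrix _ _ hadjbt r hrinj hrlo hrange c
  -- det of the adjugate-g block is 1
  have hblock1 : ((1 : Matrix (Fin n) (Fin n) K).submatrix r r)
      = (1 : Matrix (Fin m) (Fin m) K) := by
    ext i j
    simp only [Matrix.submatrix_apply, Matrix.one_apply]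
    by_cases h : i = j
    · simp [h]
    · rw [if_neg h, if_neg (fun hh => h (hrinj hh))]
  have hgblockdet : (g.submatrix r r).det = 1 := by
    have hbt : (g.submatrix r r).BlockTriangular id := by
      intro i j h
      have hji : (j : ℕ) < (i : ℕ) := h
      exact hlow _ _ (Fin.lt_def.mpr (by simp only [hr_def]; omega))
    rw [Matrix.det_of_upperTriangular hbt]
    simp [hdiag]
  have hadjblockdet : (g.adjugate.submatrix r r).det = 1 := by
    have h1 : g.adjugate * g = 1 := by
      rw [Matrix.adjugate_mul, hdetg, one_smul]
    have h2 : (g.adjugate.submatrix r r) * (g.submatrix r r) = 1 := by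
      rw [← aux_mul_submatrix _ _ hadjbt r hrinj hrlo hrange r, h1, hblock1]
    have := congrArg Matrix.det h2
    rw [Matrix.det_mul, Matrix.det_one, hgblockdet, mul_one] at this
    exact this
  rw [key, Matrix.det_mul, hadjblockdet, one_mul]
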